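/- arXiv:2006.14022 — 7 statements merged into one kernel-verified Lean document; each statement's English description precedes it below -/
import Mathlib

section
/- Let (L, R) be a cartesian factorization system on a category C. Then every commuting square t : A ⟶ B, l : A ⟶ C, r : B ⟶ D, b : C ⟶ D with r ∘ t = b ∘ l, in which the two parallel sides l and r lie in L and the two parallel sides t and b lie in R, is a pullback square. -/
open CategoryTheory Limits

universe v u v' u'

/-- An orthogonal factorization system `(L, R)` on a category `C`. -/
structure IsOFS {C : Type u} [Category.{v} C] (L R : MorphismProperty C) : Prop where
  iso_left : ∀ {X Y : C} (f : X ⟶ Y), IsIso f → L f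
  iso_right : ∀ {X Y : C} (f : X ⟶ Y), IsIso f → R f
  comp_left : ∀ {X Y Z : C} (f : X ⟶ Y) (g : Y ⟶ Z), L f → L g → L (f ≫ g)
  comp_right : ∀ {X Y Z : C} (f : X ⟶ Y) (g : Y ⟶ Z), R f → R g → R (f ≫ g)
  factor : ∀ {X Y : C} (f : X ⟶ Y), ∃ (Z : C) (e : X ⟶ Z) (m : Z ⟶ Y), L e ∧ R m ∧ e ≫ m = f
  lift : ∀ {A B X Y : C} (e : A ⟶ B) (m : X ⟶ Y) (u : A ⟶ X) (v : B ⟶ Y),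
    L e → R m → u ≫ m = e ≫ v → ∃! d : B ⟶ X, e ≫ d = u ∧ d ≫ m = v

/-- A right stable orthogonal factorization system: pullbacks of morphisms in `L`
along morphisms in `R` exist and lie in `L`. -/
structure IsRightStableOFS {C : Type u} [Category.{v} C] (L R : MorphismProperty C)
    extends IsOFS L R : Prop where
  right_stable : ∀ {A B D : C} (g : B ⟶ D) (m : A ⟶ D), L g → R m →
    ∃ (P : C) (pfst : P ⟶ A) (psnd : P ⟶ B), L pfst ∧ IsPullback pfst psnd m g

/-- A cartesian factorization system: an OFS where `L` satisfies two-out-of-three and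
pullbacks of morphisms in `L` along morphisms in `R` exist and lie in `L`. -/
structure IsCartesianFS {C : Type u} [Category.{v} C] (L R : MorphismProperty C)
    extends IsOFS L R : Prop where
  left_two_of_three : ∀ {X Y Z : C} (f : X ⟶ Y) (g : Y ⟶ Z), L g → L (f ≫ g) → L f
  right_stable : ∀ {A B D : C} (g : B ⟶ D) (m : A ⟶ D), L g → R m →
    ∃ (P : C) (pfst : P ⟶ A) (psnd : P ⟶ B), L pfst ∧ IsPullback pfst psnd m g

/-- An object `X` is `L`-injective if every extension problem along a morphism of `L`
has a unique solution. -/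
def LInjective {C : Type u} [Category.{v} C] (L : MorphismProperty C) (X : C) : Prop :=
  ∀ {A B : C} (e : A ⟶ B), L e → ∀ g : A ⟶ X, ∃! h : B ⟶ X, e ≫ h = g

/-- A morphism of `E` is `p`-vertical if its image under `p` is an isomorphism. -/
def Vert {E : Type u} {B : Type u'} [Category.{v} E] [Category.{v'} B] (p : E ⥤ B) :
    MorphismProperty E :=
  fun _ _ e => IsIso (p.map e)

/-- A morphism of `E` is `p`-cartesian (strongly cartesian). -/
def PCart {E : Type u} {B : Type u'} [Category.{v} E] [Category.{v'} B] (p : E ⥤ B) :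
    MorphismProperty E :=
  fun Z Y m => ∀ ⦃W : E⦄ (h : W ⟶ Y) (g : p.obj W ⟶ p.obj Z),
    g ≫ p.map m = p.map h → ∃! k : W ⟶ Z, p.map k = g ∧ k ≫ m = h

/-- `p` is a Grothendieck fibration: every morphism of `B` into the image of an object
of `E` has a `p`-cartesian lift. -/
def IsGrothFib {E : Type u} {B : Type u'} [Category.{v} E] [Category.{v'} B] (p : E ⥤ B) :
    Prop :=
  ∀ (Y : E) (b : B) (f : b ⟶ p.obj Y),
    ∃ (Z : E) (m : Z ⟶ Y) (hZ : p.obj Z = b), PCart p m ∧ p.map m = eqToHom hZ ≫ f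

/-- In a cartesian factorization system, every commuting square whose two parallel sides
`l, r` lie in `L` and whose two parallel sides `t, b` lie in `R` is a pullback square. -/
theorem stmt0 {C : Type u} [Category.{v} C] {L R : MorphismProperty C}
    (hLR : IsCartesianFS L R) {A B C' D : C}
    (t : A ⟶ B) (l : A ⟶ C') (r : B ⟶ D) (b : C' ⟶ D)
    (comm : t ≫ r = l ≫ b)
    (hl : L l) (hr : L r) (ht : R t) (hb : R b) :
    IsPullback t l r b := by
  obtain ⟨P, pfst, psnd, hpfst, hP⟩ := hLR.right_stable r b hr hb
  -- induced map u : A ⟶ P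
  obtain ⟨u, hul, hut⟩ : ∃ u : A ⟶ P, u ≫ pfst = l ∧ u ≫ psnd = t :=
    ⟨hP.lift l t comm.symm, hP.lift_fst l t comm.symm, hP.lift_snd l t comm.symm⟩
  -- u ∈ L by two-out-of-three
  have hu : L u := hLR.left_two_of_three u pfst hpfst (by rw [hul]; exact hl)
  -- orthogonality of u against t gives a retraction d
  obtain ⟨d, ⟨hud, hdt⟩, _⟩ := hLR.lift u t (𝟙 A) psnd hu ht (by simp [hut])
  -- d ≫ l = pfst by uniqueness of diagonal fillers for the square (u, b)
  have hpb : pfst ≫ b = psnd ≫ r := hP.w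
  have huniq := hLR.lift u b l (psnd ≫ r) hu hb (by rw [← Category.assoc, hut, comm])
  obtain ⟨d', hd', hd'uniq⟩ := huniq
  have h1 : d ≫ l = d' := hd'uniq (d ≫ l)
    ⟨by rw [← Category.assoc, hud, Category.id_comp], by rw [Category.assoc, ← comm, ← Category.assoc, hdt]⟩
  have h2 : pfst = d' := hd'uniq pfst ⟨hul, hpb⟩
  have hdl : d ≫ l = pfst := h1.trans h2.symm
  -- d ≫ u = 𝟙 P by pullback uniqueness
  have hdu : d ≫ u = 𝟙 P := by
    apply hP.hom_ext
    · rw [Category.assoc, hul, hdl, Category.id_comp]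
    · rw [Category.assoc, hut, hdt, Category.id_comp]
  have : IsIso u := ⟨d, hud, hdu⟩
  exact hP.flip.of_iso (asIso u).symm (Iso.refl _) (Iso.refl _) (Iso.refl _)
    (by simp [← hut]) (by simp [← hul]) (by simp) (by simp)
end

section
/- Let p : E ⥤ B be a Grothendieck fibration. Given a p-cartesian morphism f : A ⟶ C and a vertical morphism g : B ⟶ C in E, the pullback of g along f exists in E, and the projection from the pullback to A is vertical. -/
open CategoryTheory Limits

universe v u v' u'

/-- For a Grothendieck fibration, the pullback of a vertical morphism along a `p`-cartesian
morphism exists, and the projection to the foot of the cartesian morphism is vertical. -/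
theorem stmt2 {E : Type u} {Bc : Type u'} [Category.{v} E] [Category.{v'} Bc]
    (p : E ⥤ Bc) (hp : IsGrothFib p) {A B C' : E}
    (f : A ⟶ C') (g : B ⟶ C') (hf : PCart p f) (hg : Vert p g) :
    ∃ (P : E) (pfst : P ⟶ A) (psnd : P ⟶ B),
      IsPullback pfst psnd f g ∧ Vert p pfst := by
  haveI : IsIso (p.map g) := hg
  obtain ⟨P, m, hZ, hm, hpm⟩ := hp B (p.obj A) (p.map f ≫ inv (p.map g))
  have hcomm : (eqToHom hZ : p.obj P ⟶ p.obj A) ≫ p.map f = p.map (m ≫ g) := by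
    simp [hpm]
  obtain ⟨pfst, ⟨hpfst, hfst⟩, huniq⟩ := hf (m ≫ g) (eqToHom hZ) hcomm
  have sq : CommSq pfst m f g := ⟨hfst⟩
  have key : ∀ {W : E} (u : W ⟶ A) (v : W ⟶ B), u ≫ f = v ≫ g →
      ∃! k : W ⟶ P, k ≫ pfst = u ∧ k ≫ m = v := by
    intro W u v huv
    have hbase : (p.map u ≫ eqToHom hZ.symm) ≫ p.map m = p.map v := by
      rw [hpm]
      simp only [Category.assoc, eqToHom_trans_assoc, eqToHom_refl, Category.id_comp]
      rw [← Category.assoc, ← p.map_comp, huv, p.map_comp, Category.assoc]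
      simp
    obtain ⟨k, ⟨hk1, hk2⟩, hku⟩ := hm v (p.map u ≫ eqToHom hZ.symm) hbase
    have hkfst : k ≫ pfst = u := by
      obtain ⟨l, hl, hlu⟩ := hf (u ≫ f) (p.map u) (by rw [← p.map_comp])
      have e1 : k ≫ pfst = l := hlu _ ⟨by simp [p.map_comp, hk1, hpfst],
        by rw [Category.assoc, hfst, ← Category.assoc, hk2, huv]⟩
      have e2 : u = l := hlu _ ⟨rfl, rfl⟩
      rw [e1, ← e2]
    refine ⟨k, ⟨hkfst, hk2⟩, ?_⟩
    rintro k' ⟨hk'1, hk'2⟩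
    refine hku k' ⟨?_, hk'2⟩
    have h5 : p.map k' ≫ eqToHom hZ = p.map u := by
      rw [← hpfst, ← p.map_comp, hk'1]
    rw [← h5]; simp
  have hv : Vert p pfst := by
    unfold Vert; rw [hpfst]; infer_instance
  refine ⟨P, pfst, m, IsPullback.of_isLimit' sq ?_, hv⟩
  refine PullbackCone.IsLimit.mk _ (fun s => (key s.fst s.snd s.condition).choose)
    (fun s => (key s.fst s.snd s.condition).choose_spec.1.1)
    (fun s => (key s.fst s.snd s.condition).choose_spec.1.2)
    (fun s k hk1 hk2 => (key s.fst s.snd s.condition).choose_spec.2 k ⟨hk1, hk2⟩)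
end

section
/- Let (L, R) be a cartesian factorization system with enough L-injectives on a category C, let C_R be the full subcategory of L-injective objects, let R̂ : C ⥤ C_R be a left adjoint of the inclusion C_R ↪ C (injective replacement), and let η denote the unit of the adjunction (each η_X : X ⟶ R̂(X) lies in L). Then a morphism f : X ⟶ Y of C lies in the class R if and only if the naturality square η_Y ∘ f = R̂(f) ∘ η_X is a pullback square in C. -/
open CategoryTheory Limits

universe v u v' u'

/-! In an orthogonal factorization system `R` is exactly the class of maps with unique right
lifting against `L`; hence it is stable under pullback, left cancellable, and contains every map
between `L`-injectives, in particular `R̂ f`. So if the naturality square is a pullback, `f` is a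
pullback of `R̂ f` and lies in `R`. Conversely, for `f ∈ R` the comparison map from `X` to the
pullback of `η_Y` along `R̂ f` lies in `L` by two-out-of-three and in `R` by cancellation, so it is
an isomorphism. -/

def CategoryTheory.MorphismProperty.uniqueRlp {C : Type u} [Category.{v} C]
    (L : MorphismProperty C) : MorphismProperty C :=
  fun X Y m => ∀ ⦃A B : C⦄ (e : A ⟶ B), L e → ∀ (u : A ⟶ X) (v : B ⟶ Y), u ≫ m = e ≫ v →
    ∃! d : B ⟶ X, e ≫ d = u ∧ d ≫ m = v

namespace CategoryTheory.MorphismProperty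

variable {C : Type u} [Category.{v} C] {L : MorphismProperty C}

lemma uniqueRlp_of_isPullback {P X Y Z : C} {fst : P ⟶ X} {snd : P ⟶ Y} {f : X ⟶ Z}
    {g : Y ⟶ Z} (h : IsPullback fst snd f g) (hg : L.uniqueRlp g) : L.uniqueRlp fst := by
  intro A B e he u v huv
  obtain ⟨w, ⟨hew, hwg⟩, hw_uniq⟩ := hg e he (u ≫ snd) (v ≫ f)
    (by rw [Category.assoc, ← h.w, reassoc_of% huv])
  refine ⟨h.lift v w hwg.symm, ⟨h.hom_ext (by simp [huv]) (by simp [hew]), h.lift_fst _ _ _⟩,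
    fun k ⟨hek, hkf⟩ => h.hom_ext (by simp [hkf]) ?_⟩
  rw [h.lift_snd]
  exact hw_uniq _ ⟨by rw [← hek, Category.assoc], by rw [Category.assoc, ← h.w, reassoc_of% hkf]⟩

lemma uniqueRlp_of_comp {X Y Z : C} {g : X ⟶ Y} {m : Y ⟶ Z} (hm : L.uniqueRlp m)
    (hgm : L.uniqueRlp (g ≫ m)) : L.uniqueRlp g := by
  intro A B e he u v huv
  obtain ⟨d, ⟨hed, hdgm⟩, hd_uniq⟩ := hgm e he u (v ≫ m) (by rw [reassoc_of% huv])
  have hdg : d ≫ g = v :=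
    (hm e he (u ≫ g) (v ≫ m) (by rw [Category.assoc, reassoc_of% huv])).unique
      ⟨by rw [reassoc_of% hed], by rw [Category.assoc, hdgm]⟩ ⟨huv.symm, rfl⟩
  exact ⟨d, ⟨hed, hdg⟩, fun d' ⟨hed', hd'g⟩ => hd_uniq d' ⟨hed', by rw [reassoc_of% hd'g]⟩⟩

lemma uniqueRlp_of_lInjective {X Y : C} (hX : LInjective L X) (hY : LInjective L Y)
    (m : X ⟶ Y) : L.uniqueRlp m := by
  intro A B e he u v huv
  obtain ⟨d, hed, hd_uniq⟩ := hX e he u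
  refine ⟨d, ⟨hed, (hY e he (u ≫ m)).unique (by rw [reassoc_of% hed]) huv.symm⟩,
    fun d' hd' => hd_uniq d' hd'.1⟩

end CategoryTheory.MorphismProperty

namespace IsOFS

variable {C : Type u} [Category.{v} C] {L R : MorphismProperty C}

lemma isIso_of_left_of_right (h : IsOFS L R) {X Y : C} {u : X ⟶ Y} (hL : L u) (hR : R u) :
    IsIso u := by
  obtain ⟨d, ⟨hud, hdu⟩, -⟩ := h.lift u u (𝟙 X) (𝟙 Y) hL hR (by simp)
  exact ⟨d, hud, hdu⟩

/-- Factor `m = e ≫ r`; lifting in the square `(𝟙, r)` against `m` produces a retraction of `e`,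
which uniqueness of lifts against `r` turns into an inverse. -/
lemma right_iff_uniqueRlp (h : IsOFS L R) {X Y : C} (m : X ⟶ Y) : R m ↔ L.uniqueRlp m := by
  refine ⟨fun hm A B e he u v huv => h.lift e m u v he hm huv, fun hm => ?_⟩
  obtain ⟨Z, e, r, he, hr, rfl⟩ := h.factor m
  obtain ⟨d, ⟨hed, hdm⟩, -⟩ := hm e he (𝟙 X) r (by simp)
  have hde : d ≫ e = 𝟙 Z := (h.lift e r e r he hr rfl).unique
    ⟨by rw [reassoc_of% hed], by rw [Category.assoc, hdm]⟩ ⟨by simp, by simp⟩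
  exact h.comp_right e r (h.iso_right e ⟨d, hed, hde⟩) hr

end IsOFS

lemma IsCartesianFS.isPullback_of_left_of_right {C : Type u} [Category.{v} C]
    {L R : MorphismProperty C} (hLR : IsCartesianFS L R) {X Y X' Y' : C} {f : X ⟶ Y}
    {t : X ⟶ X'} {b : Y ⟶ Y'} {f' : X' ⟶ Y'} (hf : R f) (ht : L t) (hb : L b) (hf' : R f')
    (w : f ≫ b = t ≫ f') : IsPullback f t b f' := by
  have hOFS := hLR.toIsOFS
  obtain ⟨P, pfst, psnd, hpfst, hP⟩ := hLR.right_stable b f' hb hf'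
  have hpsnd : L.uniqueRlp psnd :=
    MorphismProperty.uniqueRlp_of_isPullback hP.flip ((hOFS.right_iff_uniqueRlp f').1 hf')
  set u := hP.lift t f w.symm
  have hu_fst : u ≫ pfst = t := hP.lift_fst _ _ _
  have hu_snd : u ≫ psnd = f := hP.lift_snd _ _ _
  have huL : L u := hLR.left_two_of_three u pfst hpfst (hu_fst ▸ ht)
  have huR : R u := (hOFS.right_iff_uniqueRlp u).2 <|
    MorphismProperty.uniqueRlp_of_comp hpsnd (hu_snd ▸ (hOFS.right_iff_uniqueRlp f).1 hf)
  have := hOFS.isIso_of_left_of_right huL huR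
  exact hP.flip.of_iso (asIso u).symm (Iso.refl _) (Iso.refl _) (Iso.refl _)
    (by simp [← hu_snd]) (by simp [← hu_fst]) (by simp) (by simp)

theorem stmt7_general {C : Type u} [Category.{v} C] {L R : MorphismProperty C}
    (hLR : IsCartesianFS L R)
    (Rhat : C ⥤ ObjectProperty.FullSubcategory (LInjective L))
    (adj : Rhat ⊣ ObjectProperty.ι (LInjective L))
    (hunit : ∀ X : C, L (adj.unit.app X))
    {X Y : C} (f : X ⟶ Y) :
    R f ↔ IsPullback f (adj.unit.app X) (adj.unit.app Y)
      ((ObjectProperty.ι (LInjective L)).map (Rhat.map f)) := by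
  have hOFS := hLR.toIsOFS
  have hRf : L.uniqueRlp ((ObjectProperty.ι (LInjective L)).map (Rhat.map f)) :=
    MorphismProperty.uniqueRlp_of_lInjective (Rhat.obj X).2 (Rhat.obj Y).2 _
  refine ⟨fun hf => hLR.isPullback_of_left_of_right hf (hunit X) (hunit Y)
    ((hOFS.right_iff_uniqueRlp _).2 hRf) (adj.unit.naturality f),
    fun hpb => (hOFS.right_iff_uniqueRlp f).2 (MorphismProperty.uniqueRlp_of_isPullback hpb hRf)⟩

/-- For a cartesian factorization system with enough `L`-injectives and injective replacement
left adjoint `Rhat` with unit in `L`, a morphism lies in `R` iff its naturality square for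
the unit is a pullback. -/
theorem stmt7 {C : Type u} [Category.{v} C] {L R : MorphismProperty C}
    (hLR : IsCartesianFS L R)
    (henough : ∀ X : C, ∃ (Y : C) (e : X ⟶ Y), L e ∧ LInjective L Y)
    (Rhat : C ⥤ ObjectProperty.FullSubcategory (LInjective L))
    (adj : Rhat ⊣ ObjectProperty.ι (LInjective L))
    (hunit : ∀ X : C, L (adj.unit.app X))
    {X Y : C} (f : X ⟶ Y) :
    R f ↔ IsPullback f (adj.unit.app X) (adj.unit.app Y)
      ((ObjectProperty.ι (LInjective L)).map (Rhat.map f)) :=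
  stmt7_general hLR Rhat adj hunit f
end

section
/- Let (L, R) be a cartesian factorization system with enough L-injectives on a category C, let C_R be the full subcategory of L-injective objects, and let R̂ : C ⥤ C_R be a left adjoint of the inclusion C_R ↪ C (injective replacement). Then a morphism f : X ⟶ Y of C lies in the class L if and only if R̂(f) is an isomorphism. -/
open CategoryTheory Limits

universe v u v' u'

/-! Both conditions say that `f` is local for the `L`-injective objects: precomposition with `f`
is a bijection on morphisms into any `L`-injective object. For `Rhat.map f` this is the
characterisation of the morphisms inverted by a reflector. Morphisms of `L` are local by the very
definition of `L`-injectivity. Conversely, if `f` is local, pick `eX : X ⟶ I` and `eY : Y ⟶ J` in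
`L` with `I`, `J` injective; the comparison map `g : J ⟶ I` with `f ≫ eY ≫ g = eX` is local between
local objects, hence an isomorphism, so `f ≫ eY ∈ L` and two-out-of-three gives `f ∈ L`. -/

lemma ObjectProperty.range_ι_obj {C : Type u} [Category.{v} C] (P : ObjectProperty C) :
    (· ∈ Set.range P.ι.obj) = P := by
  ext Z
  exact ⟨fun ⟨W, hW⟩ => hW ▸ W.property, fun hZ => ⟨⟨Z, hZ⟩, rfl⟩⟩

section

variable {C : Type u} [Category.{v} C]

lemma le_isLocal_lInjective (L : MorphismProperty C) :
    L ≤ ObjectProperty.isLocal (LInjective L) :=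
  fun _ _ e he _ hZ => (Function.bijective_iff_existsUnique _).2 (hZ e he)

lemma isLocal_lInjective_le {L R : MorphismProperty C} (hLR : IsCartesianFS L R)
    (henough : ∀ X : C, ∃ (Y : C) (e : X ⟶ Y), L e ∧ LInjective L Y) :
    ObjectProperty.isLocal (LInjective L) ≤ L := by
  intro X Y f hf
  obtain ⟨I, eX, heX, hI⟩ := henough X
  obtain ⟨J, eY, heY, hJ⟩ := henough Y
  have hfeY : ObjectProperty.isLocal (LInjective L) (f ≫ eY) :=
    MorphismProperty.comp_mem _ _ _ hf (le_isLocal_lInjective L _ heY)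
  obtain ⟨g, hg : (f ≫ eY) ≫ g = eX⟩ := (hfeY I hI).2 eX
  have : IsIso g := by
    rw [← ObjectProperty.isLocal_iff_isIso (LInjective L) g hJ hI]
    exact MorphismProperty.of_precomp _ _ _ hfeY (hg ▸ le_isLocal_lInjective L _ heX)
  refine hLR.left_two_of_three f eY heY ?_
  rw [(IsIso.eq_comp_inv g).2 hg]
  exact hLR.comp_left _ _ heX (hLR.iso_left _ inferInstance)

end

/-- For a cartesian factorization system with enough `L`-injectives and injective replacement
left adjoint `Rhat`, a morphism lies in `L` iff its injective replacement is an
isomorphism. -/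
theorem stmt8 {C : Type u} [Category.{v} C] {L R : MorphismProperty C}
    (hLR : IsCartesianFS L R)
    (henough : ∀ X : C, ∃ (Y : C) (e : X ⟶ Y), L e ∧ LInjective L Y)
    (Rhat : C ⥤ ObjectProperty.FullSubcategory (LInjective L))
    (adj : Rhat ⊣ ObjectProperty.ι (LInjective L))
    {X Y : C} (f : X ⟶ Y) :
    L f ↔ IsIso (Rhat.map f) := by
  rw [← ObjectProperty.isLocal_iff_isIso_map adj, ObjectProperty.range_ι_obj,
    (isLocal_lInjective_le hLR henough).antisymm (le_isLocal_lInjective L)]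
end

section
/- Let (L, R) be a right stable orthogonal factorization system with enough L-injectives on a category C, and for each object X fix an injective replacement η_X : X ⟶ R̂(X) lying in L with R̂(X) L-injective. Then for every object X and every morphism u : A ⟶ R̂(X) with A an L-injective object, the pullback P of η_X along u exists in C, the projection P ⟶ A lies in L (so that A is an injective replacement of P), and the projection P ⟶ X lies in R. -/
open CategoryTheory Limits

universe v u v' u'

lemma right_of_orth {C : Type u} [Category.{v} C] {L R : MorphismProperty C} (h : IsOFS L R)
    {X Y : C} (f : X ⟶ Y)
    (horth : ∀ {A B : C} (e : A ⟶ B) (a : A ⟶ X) (b : B ⟶ Y), L e → a ≫ f = e ≫ b →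
      ∃ d : B ⟶ X, e ≫ d = a ∧ d ≫ f = b) : R f := by
  obtain ⟨Z, e, m, hLe, hRm, hfac⟩ := h.factor f
  obtain ⟨d, hd1, hd2⟩ := horth e (𝟙 X) m hLe (by rw [Category.id_comp, ← hfac])
  obtain ⟨d', _, hu⟩ := h.lift e m e m hLe hRm rfl
  have h1 : d ≫ e = 𝟙 Z := by
    rw [hu (d ≫ e) ⟨by rw [← Category.assoc, hd1, Category.id_comp],
      by rw [Category.assoc, hfac, hd2]⟩,
      hu (𝟙 Z) ⟨Category.comp_id e, Category.id_comp m⟩]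
  have : IsIso e := ⟨d, hd1, h1⟩
  rw [← hfac]
  exact h.comp_right e m (h.iso_right e this) hRm

lemma r_pullback_stable {C : Type u} [Category.{v} C] {L R : MorphismProperty C} (h : IsOFS L R)
    {P A X D : C} {pfst : P ⟶ A} {psnd : P ⟶ X} {m : A ⟶ D} {g : X ⟶ D}
    (hpb : IsPullback pfst psnd m g) (hm : R m) : R psnd := by
  apply right_of_orth h
  intro V W e α β hLe hsq
  obtain ⟨d, ⟨hd1, hd2⟩, hdu⟩ := h.lift e m (α ≫ pfst) (β ≫ g) hLe hm (by
    rw [Category.assoc, hpb.w, ← Category.assoc, hsq, Category.assoc])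
  refine ⟨hpb.lift d β (by rw [hd2]), ?_, hpb.lift_snd _ _ _⟩
  apply hpb.hom_ext
  · rw [Category.assoc, hpb.lift_fst, hd1]
  · rw [Category.assoc, hpb.lift_snd, hsq]

lemma inj_of_r {C : Type u} [Category.{v} C] {L R : MorphismProperty C} (h : IsOFS L R)
    {Z I : C} (m : Z ⟶ I) (hm : R m) (hI : LInjective L I) : LInjective L Z := by
  intro U V e he g
  obtain ⟨v, hv, hvu⟩ := hI e he (g ≫ m)
  obtain ⟨d, ⟨hd1, hd2⟩, hdu⟩ := h.lift e m g v he hm hv.symm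
  exact ⟨d, hd1, fun d' hd' => hdu d' ⟨hd',
    hvu (d' ≫ m) (show e ≫ d' ≫ m = g ≫ m by rw [← Category.assoc, hd'])⟩⟩

lemma iso_of_l_inj {C : Type u} [Category.{v} C] {L : MorphismProperty C} {A Z : C} (e : A ⟶ Z)
    (he : L e) (hA : LInjective L A) (hZ : LInjective L Z) : IsIso e := by
  obtain ⟨h, hh, _⟩ := hA e he (𝟙 A)
  obtain ⟨k, _, hku⟩ := hZ e he e
  refine ⟨h, hh, ?_⟩
  rw [hku (h ≫ e) (show e ≫ h ≫ e = e by rw [← Category.assoc, hh, Category.id_comp]),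
    ← hku (𝟙 Z) (Category.comp_id e)]

/-- For a right stable OFS with chosen injective replacements `η X : X ⟶ Rhat X`, the
pullback of `η X` along any morphism `u : A ⟶ Rhat X` from an `L`-injective object `A`
exists, with the projection to `A` in `L` and the projection to `X` in `R`. -/
theorem stmt9 {C : Type u} [Category.{v} C] {L R : MorphismProperty C}
    (hLR : IsRightStableOFS L R)
    (Rhat : C → C) (η : ∀ X : C, X ⟶ Rhat X)
    (hη : ∀ X : C, L (η X)) (hinj : ∀ X : C, LInjective L (Rhat X))
    (X A : C) (hA : LInjective L A) (u : A ⟶ Rhat X) :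
    ∃ (P : C) (pX : P ⟶ X) (pA : P ⟶ A),
      IsPullback pX pA (η X) u ∧ L pA ∧ R pX := by
  obtain ⟨Z, e, m, hLe, hRm, hfac⟩ := hLR.factor u
  have hZinj : LInjective L Z := inj_of_r hLR.toIsOFS m hRm (hinj X)
  have hie : IsIso e := iso_of_l_inj e hLe hA hZinj
  have hRu : R u := by
    rw [← hfac]; exact hLR.comp_right e m (hLR.iso_right e hie) hRm
  obtain ⟨P, pfst, psnd, hLpfst, hpb⟩ := hLR.right_stable (η X) u (hη X) hRu
  exact ⟨P, psnd, pfst, hpb.flip, hLpfst, r_pullback_stable hLR.toIsOFS hpb hRu⟩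
end

section
/- Let p : E ⥤ B be a Grothendieck fibration admitting a right adjoint r : B ⥤ E such that the counit of the adjunction p ⊣ r is the identity (so p ∘ r = id). Let E_R denote the full subcategory of E on the objects that are injective with respect to vertical morphisms (i.e., the objects Z such that for every vertical e : X ⟶ Y and every g : X ⟶ Z there is a unique h : Y ⟶ Z with h ∘ e = g). Then the restriction of p to E_R is an equivalence of categories E_R ≃ B, with quasi-inverse induced by r. -/
open CategoryTheory Limits

universe v u v' u'

/-- An object of `E` is injective with respect to `p`-vertical morphisms. -/
def VInjective {E : Type u} {B : Type u'} [Category.{v} E] [Category.{v'} B]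
    (p : E ⥤ B) (Z : E) : Prop :=
  ∀ {X Y : E} (e : X ⟶ Y), Vert p e → ∀ g : X ⟶ Z, ∃! h : Y ⟶ Z, e ≫ h = g

/-!
The unit `η_Z : Z ⟶ r (p Z)` is vertical, because the counit is invertible and the triangle
identity gives `p η_Z ≫ ε_{p Z} = 𝟙`. Every `r b` is injective with respect to vertical
morphisms, since maps into `r b` correspond to maps into `b` after applying `p`. A vertical
morphism between two such injective objects is invertible, so `η_Z` is an isomorphism whenever
`Z` is injective, and `r` corestricts to a quasi-inverse of `p` on injective objects.
-/

namespace CategoryTheory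

lemma LInjective.isIso_of_mem {C : Type u} [Category.{v} C] {L : MorphismProperty C}
    {X Y : C} {e : X ⟶ Y} (he : L e) (hX : LInjective L X) (hY : LInjective L Y) :
    IsIso e := by
  obtain ⟨s, hs : e ≫ s = 𝟙 X, -⟩ := hX e he (𝟙 X)
  obtain ⟨_, -, hunique⟩ := hY e he e
  refine ⟨s, hs, ?_⟩
  rw [hunique (s ≫ e) (by simp [reassoc_of% hs]), hunique (𝟙 Y) (Category.comp_id e)]

namespace Adjunction

variable {E : Type u} {B : Type u'} [Category.{v} E] [Category.{v'} B] {p : E ⥤ B} {r : B ⥤ E}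

lemma vInjective_obj (adj : p ⊣ r) (b : B) : VInjective p (r.obj b) := by
  intro X Y e (he : IsIso (p.map e)) g
  refine ⟨adj.homEquiv Y b (inv (p.map e) ≫ (adj.homEquiv X b).symm g), ?_, ?_⟩
  · show e ≫ _ = g
    rw [← homEquiv_naturality_left, IsIso.hom_inv_id_assoc, Equiv.apply_symm_apply]
  · intro h (hh : e ≫ h = g)
    rw [← Equiv.symm_apply_eq, ← hh, homEquiv_naturality_left_symm, IsIso.inv_hom_id_assoc]

lemma vert_unit_app (adj : p ⊣ r) [IsIso adj.counit] (Z : E) : Vert p (adj.unit.app Z) :=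
  isIso_of_comp_hom_eq_id _ (adj.left_triangle_components Z)

lemma isIso_unit_app_of_vInjective (adj : p ⊣ r) [IsIso adj.counit] {Z : E}
    (hZ : VInjective p Z) : IsIso (adj.unit.app Z) :=
  LInjective.isIso_of_mem (adj.vert_unit_app Z) hZ (adj.vInjective_obj _)

noncomputable def vInjectiveEquivalence (adj : p ⊣ r) [IsIso adj.counit] :
    ObjectProperty.FullSubcategory (VInjective p) ≌ B :=
  Equivalence.mk (ObjectProperty.ι (VInjective p) ⋙ p)
    (ObjectProperty.lift (VInjective p) r adj.vInjective_obj)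
    (NatIso.ofComponents
      (fun Z => ObjectProperty.isoMk (VInjective p)
        (haveI := adj.isIso_unit_app_of_vInjective Z.property; asIso (adj.unit.app Z.obj)))
      (fun f => InducedCategory.hom_ext (adj.unit.naturality f.hom)))
    (asIso adj.counit)

end Adjunction

end CategoryTheory

theorem stmt11_general {E : Type u} {B : Type u'} [Category.{v} E] [Category.{v'} B]
    (p : E ⥤ B) (r : B ⥤ E) (adj : p ⊣ r)
    (hc : r ⋙ p = 𝟭 B) (hcounit : adj.counit = eqToHom hc) :
    (ObjectProperty.ι (VInjective p) ⋙ p).IsEquivalence ∧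
      ∃ r' : B ⥤ ObjectProperty.FullSubcategory (VInjective p),
        r' ⋙ ObjectProperty.ι (VInjective p) = r ∧
        Nonempty ((ObjectProperty.ι (VInjective p) ⋙ p) ⋙ r' ≅
          𝟭 (ObjectProperty.FullSubcategory (VInjective p))) ∧
        Nonempty (r' ⋙ (ObjectProperty.ι (VInjective p) ⋙ p) ≅ 𝟭 B) := by
  have : IsIso adj.counit := by rw [hcounit]; infer_instance
  let eqv := adj.vInjectiveEquivalence
  exact ⟨eqv.isEquivalence_functor, eqv.inverse, rfl,
    ⟨eqv.unitIso.symm⟩, ⟨eqv.counitIso⟩⟩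

/-- For a Grothendieck fibration `p` with right adjoint right inverse `r`, the restriction
of `p` to the full subcategory of objects injective with respect to vertical morphisms is
an equivalence, with quasi-inverse induced by `r`. -/
theorem stmt11 {E : Type u} {B : Type u'} [Category.{v} E] [Category.{v'} B]
    (p : E ⥤ B) (hp : IsGrothFib p) (r : B ⥤ E) (adj : p ⊣ r)
    (hc : r ⋙ p = 𝟭 B) (hcounit : adj.counit = eqToHom hc) :
    (ObjectProperty.ι (VInjective p) ⋙ p).IsEquivalence ∧
      ∃ r' : B ⥤ ObjectProperty.FullSubcategory (VInjective p),
        r' ⋙ ObjectProperty.ι (VInjective p) = r ∧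
        Nonempty ((ObjectProperty.ι (VInjective p) ⋙ p) ⋙ r' ≅
          𝟭 (ObjectProperty.FullSubcategory (VInjective p))) ∧
        Nonempty (r' ⋙ (ObjectProperty.ι (VInjective p) ⋙ p) ≅ 𝟭 B) :=
  stmt11_general p r adj hc hcounit
end

section
/- Let C and D be categories equipped with cartesian factorization systems (L_C, R_C) and (L_D, R_D) respectively, and let F : C ⥤ D be a functor with F(L_C) ⊆ L_D and F(R_C) ⊆ R_D. Then every commuting square in C whose two parallel sides lie in L_C and whose other two parallel sides lie in R_C is a pullback square in C, and its image under F is a pullback square in D. -/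
open CategoryTheory Limits

universe v u v' u'

/-- In a cartesian factorization system, a commuting square with vertical sides in `L`
and horizontal sides in `R` is a pullback. -/
lemma isPullback_of_cartesianFS {C : Type u} [Category.{v} C]
    {L R : MorphismProperty C} (h : IsCartesianFS L R)
    {A B C' D' : C} (t : A ⟶ B) (l : A ⟶ C') (r : B ⟶ D') (b : C' ⟶ D')
    (comm : t ≫ r = l ≫ b)
    (hl : L l) (hr : L r) (ht : R t) (hb : R b) :
    IsPullback t l r b := by
  obtain ⟨P, pfst, psnd, hpfst, hP⟩ := h.right_stable r b hr hb
  -- induced map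
  set i : A ⟶ P := hP.lift l t comm.symm with hidef
  have hi1 : i ≫ pfst = l := hP.lift_fst l t comm.symm
  have hi2 : i ≫ psnd = t := hP.lift_snd l t comm.symm
  have hiL : L i := h.left_two_of_three i pfst hpfst (hi1 ▸ hl)
  -- retraction d
  obtain ⟨d, ⟨hd1, hd2⟩, -⟩ := h.lift i t (𝟙 A) psnd hiL ht (by
    rw [Category.id_comp, hi2])
  -- d ≫ l = pfst via uniqueness of lifts against b
  have hdl : d ≫ l = pfst := by
    obtain ⟨d', -, huniq⟩ := h.lift i b l (pfst ≫ b) hiL hb (by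
      rw [reassoc_of% hi1])
    have h1 : d ≫ l = d' := huniq (d ≫ l) ⟨by rw [reassoc_of% hd1], by
      rw [Category.assoc, ← comm, reassoc_of% hd2, hP.w]⟩
    have h2 : pfst = d' := huniq pfst ⟨hi1, rfl⟩
    rw [h1, ← h2]
  have hdi : d ≫ i = 𝟙 P := by
    apply hP.hom_ext <;>
      simp [hi1, hi2, hdl, hd2]
  have : IsIso i := ⟨d, hd1, hdi⟩
  exact hP.flip.of_iso (asIso i).symm (Iso.refl _) (Iso.refl _) (Iso.refl _)
    (by simp [← hi2]) (by simp [← hi1]) (by simp) (by simp)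

/-- A functor between cartesian factorization systems preserving both classes sends the
(pullback) squares with parallel sides in `L` and `R` to pullback squares. -/
theorem stmt15 {C : Type u} {D : Type u'} [Category.{v} C] [Category.{v'} D]
    {LC RC : MorphismProperty C} {LD RD : MorphismProperty D}
    (hC : IsCartesianFS LC RC) (hD : IsCartesianFS LD RD)
    (F : C ⥤ D)
    (hFL : ∀ {X Y : C} (f : X ⟶ Y), LC f → LD (F.map f))
    (hFR : ∀ {X Y : C} (f : X ⟶ Y), RC f → RD (F.map f))
    {A B C' D' : C} (t : A ⟶ B) (l : A ⟶ C') (r : B ⟶ D') (b : C' ⟶ D')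
    (comm : t ≫ r = l ≫ b)
    (hl : LC l) (hr : LC r) (ht : RC t) (hb : RC b) :
    IsPullback (F.map t) (F.map l) (F.map r) (F.map b) ∧ IsPullback t l r b := by
  constructor
  · exact isPullback_of_cartesianFS hD (F.map t) (F.map l) (F.map r) (F.map b)
      (by rw [← F.map_comp, ← F.map_comp, comm]) (hFL l hl) (hFL r hr) (hFR t ht) (hFR b hb)
  · exact isPullback_of_cartesianFS hC t l r b comm hl hr ht hb
end
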